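/- arXiv:2003.03258 — 2 statements merged into one kernel-verified Lean document; each statement's English description precedes it below -/
import Mathlib

section
/- In any simple graph G, the number of subgraphs isomorphic to C₃ ⊕ P₂ (the disjoint union of a triangle and an edge) equals (1/3) ∑_{{st,uv}∈Q} ( ∑_{w ∈ Γ(s)\{s,t,u,v}} a_{tw} + ∑_{w ∈ Γ(u)\{s,t,u,v}} a_{vw} ). -/
/-
Both sides count the labelled copies of `C₃ ⊕ P₂` in `G`, i.e. the injective homomorphisms
`triEdgeGraph → G`. Two labellings have the same image subgraph exactly when they differ by an
automorphism, so every unlabelled copy carries `|Aut (C₃ ⊕ P₂)| = 12` labellings. On the other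
side, an ordered pair of disjoint edges `(s, t), (u, v)` together with a common neighbour `w` of
`s` and `t` outside them is a labelled copy with triangle `s t w` and edge `u v`, and the second
inner sum counts the labelled copies with triangle `u v w` in the same way. Hence the `8` ordered
tuples behind each element of `Q` give `(1 / 3) * (2 L / 8) = L / 12` for `L` labelled copies.
-/

open Finset BigOperators SimpleGraph

namespace CrossVar

variable {V : Type} [Fintype V] [DecidableEq V]

/-- Adjacency indicator `a_{xy}`. -/
def a (G : SimpleGraph V) [DecidableRel G.Adj] (x y : V) : ℚ := if G.Adj x y then 1 else 0

/-- Degree `k_v` as a rational number. -/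
def deg (G : SimpleGraph V) [DecidableRel G.Adj] (v : V) : ℚ := (G.degree v : ℚ)

/-- Sum over the set `Q` of unordered pairs `{st, uv}` of vertex-disjoint (independent) edges of
`G` of a function `f s t u v` (intended to be invariant under `s ↔ t`, `u ↔ v` and
`(s,t) ↔ (u,v)`).  Each unordered pair of independent edges corresponds to exactly `8` ordered
tuples `(s,t,u,v)`, whence the division by `8`. -/
def Qsum (G : SimpleGraph V) [DecidableRel G.Adj] (f : V → V → V → V → ℚ) : ℚ :=
  (∑ s, ∑ t, ∑ u, ∑ v,
    if G.Adj s t ∧ G.Adj u v ∧ s ≠ u ∧ s ≠ v ∧ t ≠ u ∧ t ≠ v then f s t u v else 0) / 8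

/-- Sum over the unordered edges `{s,t} ∈ E` of `f s t` (intended for symmetric `f`);
each unordered edge corresponds to two ordered adjacent pairs, whence the division by `2`. -/
def edgeSum (G : SimpleGraph V) [DecidableRel G.Adj] (f : V → V → ℚ) : ℚ :=
  (∑ s, ∑ t, if G.Adj s t then f s t else 0) / 2

/-- The number of subgraphs of `G` isomorphic to `F` (each unlabeled copy counted once). -/
noncomputable def copyCount {α : Type} (G : SimpleGraph V) (F : SimpleGraph α) : ℕ :=
  Nat.card {H : G.Subgraph // Nonempty (H.coe ≃g F)}

/-- `ξ(v)`: the sum of the degrees of the neighbours of `v`. -/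
def xi (G : SimpleGraph V) [DecidableRel G.Adj] (v : V) : ℚ :=
  ∑ u ∈ G.neighborFinset v, deg G u

/-- The paw graph: a triangle `{0,1,2}` with a pendant edge `{2,3}`. -/
def pawGraph : SimpleGraph (Fin 4) :=
  SimpleGraph.fromRel (fun x y => (x, y) ∈ [((0 : Fin 4), (1 : Fin 4)), (0, 2), (1, 2), (2, 3)])

/-- `C₃ ⊕ P₂`: the disjoint union of a triangle `{0,1,2}` and an edge `{3,4}`. -/
def triEdgeGraph : SimpleGraph (Fin 5) :=
  SimpleGraph.fromRel (fun x y => (x, y) ∈ [((0 : Fin 5), (1 : Fin 5)), (0, 2), (1, 2), (3, 4)])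

section Copies

variable {α β : Type*} {F : SimpleGraph α} {G : SimpleGraph β}

theorem toSubgraph_coeCopy_comp (S : G.Subgraph) (e : F ≃g S.coe) :
    (S.coeCopy.comp e.toCopy).toSubgraph = S := by
  change Subgraph.map (S.hom.comp e.toHom) ⊤ = S
  rw [Subgraph.map_comp, Subgraph.map_iso_top, Subgraph.map_hom_top]

noncomputable def isoEquivCopyFiber (S : G.Subgraph) :
    (F ≃g S.coe) ≃ {f : Copy F G // f.toSubgraph = S} :=
  Equiv.ofBijective (fun e => ⟨S.coeCopy.comp e.toCopy, toSubgraph_coeCopy_comp S e⟩) <| by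
    constructor
    · intro e e' h
      ext x
      exact congrArg (fun f : {f : Copy F G // f.toSubgraph = S} => f.1 x) h
    · rintro ⟨f, rfl⟩
      exact ⟨f.isoToSubgraph, rfl⟩

theorem natCard_copy_eq_mul_natCard_iso (F : SimpleGraph α) (G : SimpleGraph β) :
    Nat.card (Copy F G) =
      Nat.card {S : G.Subgraph // Nonempty (S.coe ≃g F)} * Nat.card (F ≃g F) := by
  let copyOf (f : Copy F G) : {S : G.Subgraph // Nonempty (S.coe ≃g F)} :=
    ⟨f.toSubgraph, ⟨f.isoToSubgraph.symm⟩⟩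
  have fiber (S : {S : G.Subgraph // Nonempty (S.coe ≃g F)}) : {f // copyOf f = S} ≃ (F ≃g F) :=
    (Equiv.subtypeEquivRight fun f => Subtype.ext_iff).trans <|
      (isoEquivCopyFiber S.1).symm.trans (RelIso.relIsoCongr (.refl _) S.2.some)
  rw [← Nat.card_prod, ← Nat.card_congr (Equiv.sigmaFiberEquiv copyOf)]
  exact Nat.card_congr (Equiv.sigmaEquivProdOfEquiv fiber)

end Copies

instance : DecidableRel triEdgeGraph.Adj := fun x y => by
  simp only [triEdgeGraph, SimpleGraph.fromRel_adj]; infer_instance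

def isoEquivAdjPreservingPerm {α : Type*} (F : SimpleGraph α) :
    (F ≃g F) ≃ {e : Equiv.Perm α // ∀ x y, F.Adj (e x) (e y) ↔ F.Adj x y} where
  toFun e := ⟨e.toEquiv, fun _ _ => e.map_rel_iff⟩
  invFun e := ⟨e.1, e.2 _ _⟩

theorem natCard_triEdgeGraph_iso : Nat.card (triEdgeGraph ≃g triEdgeGraph) = 12 := by
  rw [Nat.card_congr (isoEquivAdjPreservingPerm _), Nat.card_eq_fintype_card]
  decide

section TriangleEdge

variable {W : Type*} (G : SimpleGraph W)

def IsTriangleEdge (x y z u v : W) : Prop :=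
  G.Adj x y ∧ G.Adj x z ∧ G.Adj y z ∧ G.Adj u v ∧ x ≠ u ∧ x ≠ v ∧ y ≠ u ∧ y ≠ v ∧ z ≠ u ∧ z ≠ v

theorem injective_vecCons_five_iff (x y z u v : W) :
    Function.Injective ![x, y, z, u, v] ↔
      x ≠ y ∧ x ≠ z ∧ x ≠ u ∧ x ≠ v ∧ y ≠ z ∧ y ≠ u ∧ y ≠ v ∧ z ≠ u ∧ z ≠ v ∧ u ≠ v := by
  simp only [Matrix.vecCons, Fin.cons_injective_iff, Set.mem_range, Fin.exists_fin_succ,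
    Fin.cons_zero, Fin.cons_succ, Function.injective_of_subsingleton, IsEmpty.exists_iff,
    or_false, and_true]
  tauto

theorem map_adj_triEdgeGraph_iff (x y z u v : W) :
    (∀ i j, triEdgeGraph.Adj i j → G.Adj (![x, y, z, u, v] i) (![x, y, z, u, v] j)) ↔
      G.Adj x y ∧ G.Adj x z ∧ G.Adj y z ∧ G.Adj u v := by
  constructor
  · intro h
    exact ⟨h 0 1 (by decide), h 0 2 (by decide), h 1 2 (by decide), h 3 4 (by decide)⟩
  · rintro ⟨hxy, hxz, hyz, huv⟩
    simp [triEdgeGraph, Fin.forall_fin_succ, G.adj_comm, *]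

theorem isCopy_triEdgeGraph_iff (g : Fin 5 → W) :
    (Function.Injective g ∧ ∀ i j, triEdgeGraph.Adj i j → G.Adj (g i) (g j)) ↔
      IsTriangleEdge G (g 0) (g 1) (g 2) (g 3) (g 4) := by
  obtain ⟨x, y, z, u, v, rfl⟩ : ∃ x y z u v, g = ![x, y, z, u, v] :=
    ⟨g 0, g 1, g 2, g 3, g 4, by ext i; fin_cases i <;> rfl⟩
  change _ ↔ IsTriangleEdge G x y z u v
  rw [injective_vecCons_five_iff, map_adj_triEdgeGraph_iff, IsTriangleEdge]
  constructor
  · tauto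
  · rintro ⟨hxy, hxz, hyz, huv, h⟩
    exact ⟨⟨hxy.ne, hxz.ne, h.1, h.2.1, hyz.ne, h.2.2.1, h.2.2.2.1, h.2.2.2.2.1, h.2.2.2.2.2, huv.ne⟩,
      hxy, hxz, hyz, huv⟩

def copyTriEdgeGraphEquiv : Copy triEdgeGraph G ≃
    {p : W × W × W × W × W // IsTriangleEdge G p.1 p.2.1 p.2.2.1 p.2.2.2.1 p.2.2.2.2} where
  toFun f := ⟨(f 0, f 1, f 2, f 3, f 4),
    (isCopy_triEdgeGraph_iff G f).1 ⟨f.injective, fun _ _ h => f.toHom.map_adj h⟩⟩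
  invFun p :=
    have h := (isCopy_triEdgeGraph_iff G ![p.1.1, p.1.2.1, p.1.2.2.1, p.1.2.2.2.1, p.1.2.2.2.2]).2 p.2
    ⟨⟨_, h.2 _ _⟩, h.1⟩
  left_inv f := by ext i; fin_cases i <;> rfl
  right_inv p := rfl

instance [DecidableEq W] [DecidableRel G.Adj] (x y z u v : W) :
    Decidable (IsTriangleEdge G x y z u v) := by
  unfold IsTriangleEdge; infer_instance

end TriangleEdge

section Sums

variable {M : Type*} [AddCommMonoid M] {ι : Type*} [Fintype ι]

theorem sum_comm_pairs (f : ι → ι → ι → ι → M) :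
    ∑ s, ∑ t, ∑ u, ∑ v, f u v s t = ∑ s, ∑ t, ∑ u, ∑ v, f s t u v := by
  calc ∑ i, ∑ j, ∑ k, ∑ l, f k l i j = ∑ i, ∑ k, ∑ j, ∑ l, f k l i j :=
        sum_congr rfl fun _ _ => sum_comm
    _ = ∑ k, ∑ i, ∑ j, ∑ l, f k l i j := sum_comm
    _ = ∑ k, ∑ i, ∑ l, ∑ j, f k l i j :=
        sum_congr rfl fun _ _ => sum_congr rfl fun _ _ => sum_comm
    _ = ∑ k, ∑ l, ∑ i, ∑ j, f k l i j := sum_congr rfl fun _ _ => sum_comm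

theorem sum_comm_fifth_third (f : ι → ι → ι → ι → ι → M) :
    ∑ s, ∑ t, ∑ u, ∑ v, ∑ w, f s t w u v = ∑ s, ∑ t, ∑ u, ∑ v, ∑ w, f s t u v w := by
  refine sum_congr rfl fun s _ => sum_congr rfl fun t _ => ?_
  calc ∑ i, ∑ j, ∑ k, f s t k i j = ∑ i, ∑ k, ∑ j, f s t k i j := sum_congr rfl fun _ _ => sum_comm
    _ = ∑ k, ∑ i, ∑ j, f s t k i j := sum_comm

end Sums

theorem natCard_copy_triEdgeGraph (G : SimpleGraph V) [DecidableRel G.Adj] :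
    (Nat.card (Copy triEdgeGraph G) : ℚ) =
      ∑ x, ∑ y, ∑ z, ∑ u, ∑ v, if IsTriangleEdge G x y z u v then 1 else 0 := by
  rw [Nat.card_congr (copyTriEdgeGraphEquiv G), Nat.card_eq_fintype_card, Fintype.card_subtype,
    ← Finset.sum_boole]
  simp only [Fintype.sum_prod_type]

theorem indepEdges_summand_eq (G : SimpleGraph V) [DecidableRel G.Adj] (s t u v : V) :
    (if G.Adj s t ∧ G.Adj u v ∧ s ≠ u ∧ s ≠ v ∧ t ≠ u ∧ t ≠ v then
      (∑ w, if G.Adj s w ∧ w ≠ s ∧ w ≠ t ∧ w ≠ u ∧ w ≠ v then a G t w else 0) +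
        (∑ w, if G.Adj u w ∧ w ≠ s ∧ w ≠ t ∧ w ≠ u ∧ w ≠ v then a G v w else 0) else 0) =
      (∑ w, if IsTriangleEdge G s t w u v then 1 else 0) +
        ∑ w, if IsTriangleEdge G u v w s t then 1 else 0 := by
  split_ifs with hC
  · congr 1 <;> refine sum_congr rfl fun w _ => ?_ <;> simp only [a, IsTriangleEdge] <;>
      split_ifs <;> grind [G.ne_of_adj]
  · symm
    rw [sum_eq_zero, sum_eq_zero, add_zero] <;> intro w _ <;> rw [if_neg] <;>
      simp only [IsTriangleEdge] <;> grind

theorem sum_indepEdges_eq (G : SimpleGraph V) [DecidableRel G.Adj] :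
    (∑ s, ∑ t, ∑ u, ∑ v, if G.Adj s t ∧ G.Adj u v ∧ s ≠ u ∧ s ≠ v ∧ t ≠ u ∧ t ≠ v then
      (∑ w, if G.Adj s w ∧ w ≠ s ∧ w ≠ t ∧ w ≠ u ∧ w ≠ v then a G t w else 0) +
        (∑ w, if G.Adj u w ∧ w ≠ s ∧ w ≠ t ∧ w ≠ u ∧ w ≠ v then a G v w else 0) else 0) =
      2 * (Nat.card (Copy triEdgeGraph G) : ℚ) := by
  simp only [indepEdges_summand_eq, sum_add_distrib]
  rw [sum_comm_pairs (fun s t u v => ∑ w, if IsTriangleEdge G s t w u v then 1 else 0),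
    sum_comm_fifth_third, natCard_copy_triEdgeGraph]
  ring

theorem stmt4 (G : SimpleGraph V) [DecidableRel G.Adj] :
    (copyCount G triEdgeGraph : ℚ) =
      (1 / 3) * Qsum G (fun s t u v =>
        (∑ w, if G.Adj s w ∧ w ≠ s ∧ w ≠ t ∧ w ≠ u ∧ w ≠ v then a G t w else 0) +
        (∑ w, if G.Adj u w ∧ w ≠ s ∧ w ≠ t ∧ w ≠ u ∧ w ≠ v then a G v w else 0)) := by
  have hcard := natCard_copy_eq_mul_natCard_iso triEdgeGraph G
  rw [natCard_triEdgeGraph_iso] at hcard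
  simp only [Qsum]
  rw [sum_indepEdges_eq, hcard, copyCount]
  push_cast
  ring

end CrossVar
end

section
/- In any simple graph G, Φ₁ := ∑_{{st,uv}∈Q} (k_s k_t + k_u k_v) = (m+1)ψ - ∑_{st∈E} k_s k_t (k_s + k_t), where ψ = ∑_{st∈E} k_s k_t. -/
open Finset BigOperators SimpleGraph

namespace CrossVar

variable {V : Type} [Fintype V] [DecidableEq V]

set_option linter.unusedSectionVars false

section Aux
variable (G : SimpleGraph V) [DecidableRel G.Adj]

def xiq (s : V) : ℚ := ∑ t, a G s t * deg G t
def S2q : ℚ := ∑ s, ∑ t, a G s t * (deg G s * deg G t)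
def Tqq : ℚ := ∑ s, ∑ t, a G s t * (deg G s * deg G s * deg G t)
def Cqq : ℚ := ∑ s, ∑ t, a G s t

lemma a_symm (x y : V) : a G x y = a G y x := by simp [a, SimpleGraph.adj_comm]
lemma a_sq (x y : V) : a G x y * a G x y = a G x y := by
  simp only [a]; split_ifs <;> norm_num
lemma sum_a (u : V) : ∑ v, a G u v = deg G u := by
  simp [a, deg, SimpleGraph.degree, SimpleGraph.neighborFinset_eq_filter, Finset.sum_boole]
lemma sum_a_col (t : V) : ∑ s, a G s t = deg G t := by
  simp only [fun s => a_symm G s t]; exact sum_a G t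
lemma sum_a_deg_col (t : V) : ∑ s, a G s t * deg G s = xiq G t := by
  simp only [fun s => a_symm G s t]; rfl
lemma Tq_eq : Tqq G = ∑ s, deg G s * deg G s * xiq G s := by
  unfold Tqq xiq
  refine Finset.sum_congr rfl fun s _ => ?_
  rw [Finset.mul_sum]
  exact Finset.sum_congr rfl fun t _ => by ring
lemma S2_eq : S2q G = ∑ s, deg G s * xiq G s := by
  unfold S2q xiq
  refine Finset.sum_congr rfl fun s _ => ?_
  rw [Finset.mul_sum]
  exact Finset.sum_congr rfl fun t _ => by ring
lemma Tq_symm : (∑ s, ∑ t, a G s t * (deg G s * deg G t * deg G t)) = Tqq G := by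
  rw [Finset.sum_comm]
  unfold Tqq
  refine Finset.sum_congr rfl fun s _ => Finset.sum_congr rfl fun t _ => ?_
  rw [a_symm G t s]; ring
lemma sum_ite_const' {p : Prop} [Decidable p] (f : V → ℚ) :
    ∑ v, (if p then f v else 0) = if p then ∑ v, f v else 0 := by
  split_ifs <;> simp

-- Σ1
lemma sig1 :
    (∑ s, ∑ t, ∑ u, ∑ v, a G s t * a G u v * (deg G s * deg G t + deg G u * deg G v))
      = S2q G * Cqq G + Cqq G * S2q G := by
  have inner : ∀ s t : V, (∑ u, ∑ v, a G s t * a G u v * (deg G s * deg G t + deg G u * deg G v))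
      = a G s t * (deg G s * deg G t) * Cqq G + a G s t * S2q G := by
    intro s t
    calc (∑ u, ∑ v, a G s t * a G u v * (deg G s * deg G t + deg G u * deg G v))
        = ∑ u, ∑ v, (a G s t * (deg G s * deg G t) * a G u v
            + a G s t * (a G u v * (deg G u * deg G v))) := by
          exact Finset.sum_congr rfl fun u _ => Finset.sum_congr rfl fun v _ => by ring
      _ = (∑ u, ∑ v, a G s t * (deg G s * deg G t) * a G u v)
            + ∑ u, ∑ v, a G s t * (a G u v * (deg G u * deg G v)) := by
          rw [← Finset.sum_add_distrib]
          exact Finset.sum_congr rfl fun u _ => Finset.sum_add_distrib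
      _ = a G s t * (deg G s * deg G t) * Cqq G + a G s t * S2q G := by
          simp only [← Finset.mul_sum]; rfl
  calc (∑ s, ∑ t, ∑ u, ∑ v, a G s t * a G u v * (deg G s * deg G t + deg G u * deg G v))
      = ∑ s, ∑ t, (a G s t * (deg G s * deg G t) * Cqq G + a G s t * S2q G) := by
        exact Finset.sum_congr rfl fun s _ => Finset.sum_congr rfl fun t _ => inner s t
    _ = (∑ s, ∑ t, a G s t * (deg G s * deg G t)) * Cqq G
          + (∑ s, ∑ t, a G s t) * S2q G := by
        simp only [Finset.sum_add_distrib, Finset.sum_mul]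
    _ = S2q G * Cqq G + Cqq G * S2q G := rfl

-- Σ2 : collapse u = s
lemma sig2 :
    (∑ s, ∑ t, ∑ u, ∑ v,
        if s = u then a G s t * a G u v * (deg G s * deg G t + deg G u * deg G v) else 0)
      = 2 * Tqq G := by
  have col : ∀ s t : V, (∑ u, ∑ v,
      if s = u then a G s t * a G u v * (deg G s * deg G t + deg G u * deg G v) else 0)
      = ∑ v, a G s t * a G s v * (deg G s * deg G t + deg G s * deg G v) := by
    intro s t
    simp only [sum_ite_const']
    simp [Finset.sum_ite_eq]
  have inner : ∀ s t : V, (∑ v, a G s t * a G s v * (deg G s * deg G t + deg G s * deg G v))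
      = a G s t * (deg G s * deg G s * deg G t) + a G s t * (deg G s * xiq G s) := by
    intro s t
    calc (∑ v, a G s t * a G s v * (deg G s * deg G t + deg G s * deg G v))
        = ∑ v, (a G s t * (deg G s * deg G t) * a G s v
            + (a G s t * deg G s) * (a G s v * deg G v)) := by
          exact Finset.sum_congr rfl fun v _ => by ring
      _ = a G s t * (deg G s * deg G t) * (∑ v, a G s v)
            + (a G s t * deg G s) * (∑ v, a G s v * deg G v) := by
          rw [Finset.sum_add_distrib, ← Finset.mul_sum, ← Finset.mul_sum]
      _ = _ := by rw [sum_a]; unfold xiq; ring_nf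
  calc (∑ s, ∑ t, ∑ u, ∑ v,
        if s = u then a G s t * a G u v * (deg G s * deg G t + deg G u * deg G v) else 0)
      = ∑ s, ∑ t, (a G s t * (deg G s * deg G s * deg G t) + a G s t * (deg G s * xiq G s)) := by
        exact Finset.sum_congr rfl fun s _ => Finset.sum_congr rfl fun t _ => by
          rw [col s t, inner s t]
    _ = Tqq G + ∑ s, (deg G s * xiq G s) * deg G s := by
        simp only [Finset.sum_add_distrib]
        congr 1
        refine Finset.sum_congr rfl fun s _ => ?_
        calc (∑ t, a G s t * (deg G s * xiq G s))
            = (∑ t, a G s t) * (deg G s * xiq G s) := by rw [Finset.sum_mul]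
          _ = (deg G s * xiq G s) * deg G s := by rw [sum_a]; ring
    _ = 2 * Tqq G := by
        rw [Tq_eq]
        have h : ∑ s, (deg G s * xiq G s) * deg G s = ∑ s, deg G s * deg G s * xiq G s :=
          Finset.sum_congr rfl fun s _ => by ring
        rw [h]; ring

-- Σ3 : collapse v = s
lemma sig3 :
    (∑ s, ∑ t, ∑ u, ∑ v,
        if s = v then a G s t * a G u v * (deg G s * deg G t + deg G u * deg G v) else 0)
      = 2 * Tqq G := by
  have col : ∀ s t : V, (∑ u, ∑ v,
      if s = v then a G s t * a G u v * (deg G s * deg G t + deg G u * deg G v) else 0)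
      = ∑ u, a G s t * a G s u * (deg G s * deg G t + deg G s * deg G u) := by
    intro s t
    simp only [Finset.sum_ite_eq, Finset.mem_univ, if_true]
    exact Finset.sum_congr rfl fun u _ => by rw [a_symm G u s]; ring
  have inner : ∀ s t : V, (∑ v, a G s t * a G s v * (deg G s * deg G t + deg G s * deg G v))
      = a G s t * (deg G s * deg G s * deg G t) + a G s t * (deg G s * xiq G s) := by
    intro s t
    calc (∑ v, a G s t * a G s v * (deg G s * deg G t + deg G s * deg G v))
        = ∑ v, (a G s t * (deg G s * deg G t) * a G s v
            + (a G s t * deg G s) * (a G s v * deg G v)) := by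
          exact Finset.sum_congr rfl fun v _ => by ring
      _ = a G s t * (deg G s * deg G t) * (∑ v, a G s v)
            + (a G s t * deg G s) * (∑ v, a G s v * deg G v) := by
          rw [Finset.sum_add_distrib, ← Finset.mul_sum, ← Finset.mul_sum]
      _ = _ := by rw [sum_a]; unfold xiq; ring_nf
  calc (∑ s, ∑ t, ∑ u, ∑ v,
        if s = v then a G s t * a G u v * (deg G s * deg G t + deg G u * deg G v) else 0)
      = ∑ s, ∑ t, (a G s t * (deg G s * deg G s * deg G t) + a G s t * (deg G s * xiq G s)) := by
        exact Finset.sum_congr rfl fun s _ => Finset.sum_congr rfl fun t _ => by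
          rw [col s t, inner s t]
    _ = Tqq G + ∑ s, (deg G s * xiq G s) * deg G s := by
        simp only [Finset.sum_add_distrib]
        congr 1
        refine Finset.sum_congr rfl fun s _ => ?_
        calc (∑ t, a G s t * (deg G s * xiq G s))
            = (∑ t, a G s t) * (deg G s * xiq G s) := by rw [Finset.sum_mul]
          _ = (deg G s * xiq G s) * deg G s := by rw [sum_a]; ring
    _ = 2 * Tqq G := by
        rw [Tq_eq]
        have h : ∑ s, (deg G s * xiq G s) * deg G s = ∑ s, deg G s * deg G s * xiq G s :=
          Finset.sum_congr rfl fun s _ => by ring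
        rw [h]; ring

-- common tail for Σ4, Σ5
lemma tail45 :
    (∑ s, ∑ t, (a G s t * (deg G s * deg G t * deg G t) + a G s t * (deg G t * xiq G t)))
      = 2 * Tqq G := by
  calc (∑ s, ∑ t, (a G s t * (deg G s * deg G t * deg G t) + a G s t * (deg G t * xiq G t)))
      = (∑ s, ∑ t, a G s t * (deg G s * deg G t * deg G t))
          + ∑ s, ∑ t, a G s t * (deg G t * xiq G t) := by
        rw [← Finset.sum_add_distrib]
        exact Finset.sum_congr rfl fun s _ => Finset.sum_add_distrib
    _ = Tqq G + ∑ t, deg G t * deg G t * xiq G t := by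
        rw [Tq_symm, Finset.sum_comm]
        congr 1
        refine Finset.sum_congr rfl fun t _ => ?_
        calc (∑ s, a G s t * (deg G t * xiq G t))
            = (∑ s, a G s t) * (deg G t * xiq G t) := by rw [Finset.sum_mul]
          _ = deg G t * deg G t * xiq G t := by rw [sum_a_col]; ring
    _ = 2 * Tqq G := by rw [← Tq_eq]; ring

-- Σ4 : collapse u = t
lemma sig4 :
    (∑ s, ∑ t, ∑ u, ∑ v,
        if t = u then a G s t * a G u v * (deg G s * deg G t + deg G u * deg G v) else 0)
      = 2 * Tqq G := by
  have col : ∀ s t : V, (∑ u, ∑ v,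
      if t = u then a G s t * a G u v * (deg G s * deg G t + deg G u * deg G v) else 0)
      = ∑ v, a G s t * a G t v * (deg G s * deg G t + deg G t * deg G v) := by
    intro s t
    simp only [sum_ite_const']
    simp [Finset.sum_ite_eq]
  have inner : ∀ s t : V, (∑ v, a G s t * a G t v * (deg G s * deg G t + deg G t * deg G v))
      = a G s t * (deg G s * deg G t * deg G t) + a G s t * (deg G t * xiq G t) := by
    intro s t
    calc (∑ v, a G s t * a G t v * (deg G s * deg G t + deg G t * deg G v))
        = ∑ v, (a G s t * (deg G s * deg G t) * a G t v
            + (a G s t * deg G t) * (a G t v * deg G v)) := by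
          exact Finset.sum_congr rfl fun v _ => by ring
      _ = a G s t * (deg G s * deg G t) * (∑ v, a G t v)
            + (a G s t * deg G t) * (∑ v, a G t v * deg G v) := by
          rw [Finset.sum_add_distrib, ← Finset.mul_sum, ← Finset.mul_sum]
      _ = _ := by rw [sum_a]; unfold xiq; ring_nf
  calc (∑ s, ∑ t, ∑ u, ∑ v,
        if t = u then a G s t * a G u v * (deg G s * deg G t + deg G u * deg G v) else 0)
      = ∑ s, ∑ t, (a G s t * (deg G s * deg G t * deg G t) + a G s t * (deg G t * xiq G t)) := by
        exact Finset.sum_congr rfl fun s _ => Finset.sum_congr rfl fun t _ => by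
          rw [col s t, inner s t]
    _ = 2 * Tqq G := tail45 G

-- Σ5 : collapse v = t
lemma sig5 :
    (∑ s, ∑ t, ∑ u, ∑ v,
        if t = v then a G s t * a G u v * (deg G s * deg G t + deg G u * deg G v) else 0)
      = 2 * Tqq G := by
  have col : ∀ s t : V, (∑ u, ∑ v,
      if t = v then a G s t * a G u v * (deg G s * deg G t + deg G u * deg G v) else 0)
      = ∑ u, a G s t * a G t u * (deg G s * deg G t + deg G t * deg G u) := by
    intro s t
    simp only [Finset.sum_ite_eq, Finset.mem_univ, if_true]
    exact Finset.sum_congr rfl fun u _ => by rw [a_symm G u t]; ring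
  have inner : ∀ s t : V, (∑ v, a G s t * a G t v * (deg G s * deg G t + deg G t * deg G v))
      = a G s t * (deg G s * deg G t * deg G t) + a G s t * (deg G t * xiq G t) := by
    intro s t
    calc (∑ v, a G s t * a G t v * (deg G s * deg G t + deg G t * deg G v))
        = ∑ v, (a G s t * (deg G s * deg G t) * a G t v
            + (a G s t * deg G t) * (a G t v * deg G v)) := by
          exact Finset.sum_congr rfl fun v _ => by ring
      _ = a G s t * (deg G s * deg G t) * (∑ v, a G t v)
            + (a G s t * deg G t) * (∑ v, a G t v * deg G v) := by
          rw [Finset.sum_add_distrib, ← Finset.mul_sum, ← Finset.mul_sum]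
      _ = _ := by rw [sum_a]; unfold xiq; ring_nf
  calc (∑ s, ∑ t, ∑ u, ∑ v,
        if t = v then a G s t * a G u v * (deg G s * deg G t + deg G u * deg G v) else 0)
      = ∑ s, ∑ t, (a G s t * (deg G s * deg G t * deg G t) + a G s t * (deg G t * xiq G t)) := by
        exact Finset.sum_congr rfl fun s _ => Finset.sum_congr rfl fun t _ => by
          rw [col s t, inner s t]
    _ = 2 * Tqq G := tail45 G

-- Σ6 : collapse u = s, v = t
lemma sig6 :
    (∑ s, ∑ t, ∑ u, ∑ v,
        if s = u ∧ t = v then a G s t * a G u v * (deg G s * deg G t + deg G u * deg G v) else 0)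
      = 2 * S2q G := by
  have col : ∀ s t : V, (∑ u, ∑ v,
      if s = u ∧ t = v then a G s t * a G u v * (deg G s * deg G t + deg G u * deg G v) else 0)
      = a G s t * a G s t * (deg G s * deg G t + deg G s * deg G t) := by
    intro s t
    simp only [ite_and, sum_ite_const']
    simp [Finset.sum_ite_eq]
  calc (∑ s, ∑ t, ∑ u, ∑ v,
        if s = u ∧ t = v then a G s t * a G u v * (deg G s * deg G t + deg G u * deg G v) else 0)
      = ∑ s, ∑ t, 2 * (a G s t * (deg G s * deg G t)) := by
        refine Finset.sum_congr rfl fun s _ => Finset.sum_congr rfl fun t _ => ?_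
        rw [col s t]
        calc a G s t * a G s t * (deg G s * deg G t + deg G s * deg G t)
            = a G s t * a G s t * (2 * (deg G s * deg G t)) := by ring
          _ = 2 * (a G s t * (deg G s * deg G t)) := by rw [a_sq]; ring
    _ = 2 * S2q G := by
        simp only [← Finset.mul_sum]; rfl

-- Σ7 : collapse v = s, u = t
lemma sig7 :
    (∑ s, ∑ t, ∑ u, ∑ v,
        if s = v ∧ t = u then a G s t * a G u v * (deg G s * deg G t + deg G u * deg G v) else 0)
      = 2 * S2q G := by
  have col : ∀ s t : V, (∑ u, ∑ v,
      if s = v ∧ t = u then a G s t * a G u v * (deg G s * deg G t + deg G u * deg G v) else 0)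
      = a G s t * a G t s * (deg G s * deg G t + deg G t * deg G s) := by
    intro s t
    simp only [ite_and, sum_ite_const']
    simp [Finset.sum_ite_eq]
  calc (∑ s, ∑ t, ∑ u, ∑ v,
        if s = v ∧ t = u then a G s t * a G u v * (deg G s * deg G t + deg G u * deg G v) else 0)
      = ∑ s, ∑ t, 2 * (a G s t * (deg G s * deg G t)) := by
        refine Finset.sum_congr rfl fun s _ => Finset.sum_congr rfl fun t _ => ?_
        rw [col s t, ← a_symm G s t]
        calc a G s t * a G s t * (deg G s * deg G t + deg G t * deg G s)
            = a G s t * a G s t * (2 * (deg G s * deg G t)) := by ring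
          _ = 2 * (a G s t * (deg G s * deg G t)) := by rw [a_sq]; ring
    _ = 2 * S2q G := by
        simp only [← Finset.mul_sum]; rfl

lemma Cq_eq : Cqq G = 2 * (G.edgeFinset.card : ℚ) := by
  unfold Cqq
  simp only [sum_a]
  have h := SimpleGraph.sum_degrees_eq_twice_card_edges G
  have h2 : (∑ v, deg G v) = ((∑ v, G.degree v : ℕ) : ℚ) := by push_cast [deg]; rfl
  rw [h2, h]; push_cast; ring

lemma key (s t u v : V) :
    (if G.Adj s t ∧ G.Adj u v ∧ s ≠ u ∧ s ≠ v ∧ t ≠ u ∧ t ≠ v then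
        deg G s * deg G t + deg G u * deg G v else 0)
    = a G s t * a G u v * (deg G s * deg G t + deg G u * deg G v)
      - (if s = u then a G s t * a G u v * (deg G s * deg G t + deg G u * deg G v) else 0)
      - (if s = v then a G s t * a G u v * (deg G s * deg G t + deg G u * deg G v) else 0)
      - (if t = u then a G s t * a G u v * (deg G s * deg G t + deg G u * deg G v) else 0)
      - (if t = v then a G s t * a G u v * (deg G s * deg G t + deg G u * deg G v) else 0)
      + (if s = u ∧ t = v then a G s t * a G u v * (deg G s * deg G t + deg G u * deg G v) else 0)
      + (if s = v ∧ t = u then a G s t * a G u v * (deg G s * deg G t + deg G u * deg G v) else 0) := by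
  by_cases h1 : G.Adj s t <;> by_cases h2 : G.Adj u v <;>
    by_cases h3 : s = u <;> by_cases h4 : s = v <;> by_cases h5 : t = u <;> by_cases h6 : t = v <;>
    subst_vars <;> simp_all [a] <;> ring

lemma edgeSum1 : edgeSum G (fun s t => deg G s * deg G t) = S2q G / 2 := by
  unfold edgeSum S2q
  congr 1
  refine Finset.sum_congr rfl fun s _ => Finset.sum_congr rfl fun t _ => ?_
  by_cases h : G.Adj s t <;> simp [a, h]

lemma edgeSum2 :
    edgeSum G (fun s t => deg G s * deg G t * (deg G s + deg G t)) = Tqq G := by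
  unfold edgeSum
  have h : (∑ s, ∑ t, if G.Adj s t then deg G s * deg G t * (deg G s + deg G t) else 0)
      = (∑ s, ∑ t, (a G s t * (deg G s * deg G s * deg G t)
          + a G s t * (deg G s * deg G t * deg G t))) := by
    refine Finset.sum_congr rfl fun s _ => Finset.sum_congr rfl fun t _ => ?_
    by_cases hst : G.Adj s t <;> simp [a, hst] <;> ring
  rw [h]
  have h2 : (∑ s, ∑ t, (a G s t * (deg G s * deg G s * deg G t)
      + a G s t * (deg G s * deg G t * deg G t)))
      = (∑ s, ∑ t, a G s t * (deg G s * deg G s * deg G t))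
        + ∑ s, ∑ t, a G s t * (deg G s * deg G t * deg G t) := by
    rw [← Finset.sum_add_distrib]
    exact Finset.sum_congr rfl fun s _ => Finset.sum_add_distrib
  rw [h2, Tq_symm]
  have h3 : (∑ s, ∑ t, a G s t * (deg G s * deg G s * deg G t)) = Tqq G := rfl
  rw [h3]; ring


end Aux

theorem stmt8 (G : SimpleGraph V) [DecidableRel G.Adj] :
    Qsum G (fun s t u v => deg G s * deg G t + deg G u * deg G v) =
      ((G.edgeFinset.card : ℚ) + 1) * edgeSum G (fun s t => deg G s * deg G t)
        - edgeSum G (fun s t => deg G s * deg G t * (deg G s + deg G t)) := by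
  unfold Qsum
  rw [edgeSum1, edgeSum2]
  simp only [key]
  simp only [Finset.sum_sub_distrib, Finset.sum_add_distrib]
  rw [sig1, sig2, sig3, sig4, sig5, sig6, sig7, Cq_eq]
  ring


end CrossVar
end
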